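/- arXiv:2304.09071 — 4 statements merged into one kernel-verified Lean document; each statement's English description precedes it below -/
import Mathlib

section
/- Let $K/\mathbb{Q}$ be a number field of degree $\delta$ generated by an algebraic integer $\alpha$ with minimal polynomial $m_\alpha(x)=b_0+b_1x+\cdots+b_{\delta-1}x^{\delta-1}+x^\delta\in\mathbb{Z}[x]$, and let $S=\max\{|b_i| : 0\le i\le \delta-1\}$. If $y=\sum_{i=0}^{\delta-1} z_i\alpha^i$ with $z_i\in\mathbb{Z}$ and $|z_i|<M$ for every $i$, then $|N_{K/\mathbb{Q}}(y)|\le \delta^{\delta/2}(1+S)^{(\delta-1)\delta/2}(M-1)^\delta$. -/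
open Polynomial Finset

/-!
Write `y = P(α)` with `P = ∑ zᵢ Xⁱ`. In the basis `1, α, …, α^(δ-1)` the `j`-th column of the
matrix of multiplication by `y` holds the coefficients of `Xʲ P mod m_α`, so `N(y)` is the
determinant of an integer matrix. Reducing `X q` modulo the monic `m_α` subtracts `c • m_α`, where
`c` is the top coefficient of `q`, so each multiplication by `X` raises the coefficient bound by a
factor of at most `1 + S`: column `j` has entries at most `(M - 1)(1 + S)ʲ`. Hadamard's inequality
then bounds the determinant by `√δ^δ ∏ⱼ (M - 1)(1 + S)ʲ`.
-/

namespace Polynomial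

section CommRing

variable {R : Type*} [CommRing R] {m p : R[X]}

theorem X_mul_modByMonic (hm : m.Monic) (p : R[X]) :
    (X * p) %ₘ m = (X * (p %ₘ m)) %ₘ m :=
  modByMonic_eq_of_dvd_sub hm ⟨X * (p /ₘ m), by rw [modByMonic_eq_sub_mul_div p m]; ring⟩

theorem X_mul_modByMonic_of_degree_lt (hm : m.Monic) (hp : p.degree < m.degree) :
    (X * p) %ₘ m = X * p - C (p.coeff (m.natDegree - 1)) * m := by
  nontriviality R
  refine (div_modByMonic_unique (C (p.coeff (m.natDegree - 1))) _ hm ⟨by ring, ?_⟩).2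
  rw [degree_eq_natDegree hm.ne_zero, degree_lt_iff_coeff_zero] at *
  intro t ht
  rw [coeff_sub, coeff_C_mul]
  obtain _ | s := t
  · have hp0 : p = 0 := ext fun i => by simpa using hp i (by omega)
    simp [hp0]
  rw [coeff_X_mul]
  rcases ht.eq_or_lt with hd | hd
  · rw [← hd, hm.coeff_natDegree, hd, Nat.add_sub_cancel, mul_one, sub_self]
  · rw [hp s (by omega), coeff_eq_zero_of_natDegree_lt hd, mul_zero, sub_zero]

end CommRing

section Ordered

variable {R : Type*} [CommRing R] [LinearOrder R] [IsStrictOrderedRing R] {m p : R[X]} {S B : R}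

theorem abs_coeff_ofFn_le {n : ℕ} {v : Fin n → R} (hB : 0 ≤ B) (hv : ∀ i, |v i| ≤ B) (i : ℕ) :
    |(ofFn n v).coeff i| ≤ B := by
  rcases lt_or_ge i n with hi | hi
  · rw [ofFn_coeff_eq_val_of_lt v hi]
    exact hv _
  · rwa [ofFn_coeff_eq_zero_of_ge v hi, abs_zero]

theorem abs_coeff_X_mul_modByMonic_le (hm : m.Monic) (hS0 : 0 ≤ S)
    (hS : ∀ i < m.natDegree, |m.coeff i| ≤ S) (hp : ∀ i, |(p %ₘ m).coeff i| ≤ B) (t : ℕ) :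
    |((X * p) %ₘ m).coeff t| ≤ B * (1 + S) := by
  have hB : 0 ≤ B := (abs_nonneg _).trans (hp 0)
  rcases le_or_gt m.natDegree t with ht | ht
  · rw [coeff_eq_zero_of_degree_lt, abs_zero]
    · exact mul_nonneg hB (by linarith)
    refine (degree_modByMonic_lt _ hm).trans_le ?_
    rw [degree_eq_natDegree hm.ne_zero]
    exact_mod_cast ht
  set r := p %ₘ m
  have hXr : |(X * r).coeff t| ≤ B := by
    cases t with
    | zero => simpa using hB
    | succ s => rw [coeff_X_mul]; exact hp s
  rw [X_mul_modByMonic hm, X_mul_modByMonic_of_degree_lt hm (degree_modByMonic_lt p hm),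
    coeff_sub, coeff_C_mul]
  calc |(X * r).coeff t - r.coeff (m.natDegree - 1) * m.coeff t|
      ≤ |(X * r).coeff t| + |r.coeff (m.natDegree - 1)| * |m.coeff t| := by
        rw [← abs_mul]; exact abs_sub _ _
    _ ≤ B + B * S := add_le_add hXr (mul_le_mul (hp _) (hS t ht) (abs_nonneg _) hB)
    _ = B * (1 + S) := by ring

theorem abs_coeff_X_pow_mul_modByMonic_le (hm : m.Monic) (hS0 : 0 ≤ S)
    (hS : ∀ i < m.natDegree, |m.coeff i| ≤ S) (hp : ∀ i, |(p %ₘ m).coeff i| ≤ B) (j t : ℕ) :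
    |((X ^ j * p) %ₘ m).coeff t| ≤ B * (1 + S) ^ j := by
  induction j generalizing t with
  | zero => simpa using hp t
  | succ j ih =>
    rw [pow_succ', mul_assoc X, pow_succ, ← mul_assoc B]
    exact abs_coeff_X_mul_modByMonic_le hm hS0 hS ih t

end Ordered

end Polynomial

theorem Fin.prod_mul_pow_val {M : Type*} [CommMonoid M] (a b : M) (n : ℕ) :
    ∏ i : Fin n, a * b ^ (i : ℕ) = a ^ n * b ^ ((n - 1) * n / 2) := by
  rw [prod_mul_distrib, prod_const, prod_pow_eq_pow_sum,
    Fin.sum_univ_eq_sum_range (fun i => i), sum_range_id, Nat.mul_comm]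

namespace Matrix

theorem abs_det_le_prod_sqrt_sum_sq {n : ℕ} (A : Matrix (Fin n) (Fin n) ℝ) :
    |A.det| ≤ ∏ i, √(∑ j, A i j ^ 2) := by
  have : Fact (Module.finrank ℝ (EuclideanSpace ℝ (Fin n)) = n) := ⟨finrank_euclideanSpace_fin⟩
  let b := EuclideanSpace.basisFun (Fin n) ℝ
  let v i : EuclideanSpace ℝ (Fin n) := WithLp.toLp 2 (A i)
  have hdet : b.toBasis.orientation.volumeForm v = A.det := by
    rw [b.toBasis.orientation.volumeForm_robust b rfl, Module.Basis.det_apply, ← det_transpose]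
    rfl
  calc |A.det| = |b.toBasis.orientation.volumeForm v| := by rw [hdet]
    _ ≤ ∏ i, ‖v i‖ := b.toBasis.orientation.abs_volumeForm_apply_le v
    _ = ∏ i, √(∑ j, A i j ^ 2) := by simp [v, EuclideanSpace.norm_eq]

theorem abs_det_le_sqrt_pow_mul_prod_of_abs_le {n : ℕ} (A : Matrix (Fin n) (Fin n) ℝ)
    (c : Fin n → ℝ) (hc : ∀ i j, |A i j| ≤ c j) : |A.det| ≤ √n ^ n * ∏ j, c j := by
  have hcol (j : Fin n) : √(∑ i, A i j ^ 2) ≤ √n * c j := by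
    have hc0 : 0 ≤ c j := (abs_nonneg _).trans (hc j j)
    calc √(∑ i, A i j ^ 2) ≤ √(∑ _i : Fin n, c j ^ 2) :=
          Real.sqrt_le_sqrt <| sum_le_sum fun i _ => sq_le_sq.2 ((hc i j).trans (le_abs_self _))
      _ = √n * c j := by simp [Real.sqrt_sq hc0]
  calc |A.det| = |Aᵀ.det| := by rw [det_transpose]
    _ ≤ ∏ j, √(∑ i, A i j ^ 2) := Aᵀ.abs_det_le_prod_sqrt_sum_sq
    _ ≤ ∏ j, √n * c j := prod_le_prod (fun _ _ => Real.sqrt_nonneg _) fun j _ => hcol j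
    _ = √n ^ n * ∏ j, c j := by simp [prod_mul_distrib]

end Matrix

namespace IsAdjoinRootMonic

variable {R S : Type*} [CommRing R] [CommRing S] [Algebra R S] {f : R[X]}

theorem leftMulMatrix_basis_map (h : IsAdjoinRootMonic S f) (g : R[X]) :
    Algebra.leftMulMatrix h.basis (h.map g) =
      Matrix.of fun i j : Fin f.natDegree => ((X ^ (j : ℕ) * g) %ₘ f).coeff i := by
  ext i j
  rw [Algebra.leftMulMatrix_eq_repr_mul, h.basis_apply, h.basis_repr, IsAdjoinRoot.root, ← map_pow,
    ← map_mul, mul_comm, modByMonicHom_map, Matrix.of_apply]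

theorem norm_map_eq_det (h : IsAdjoinRootMonic S f) (g : R[X]) :
    Algebra.norm R (h.map g) =
      (Matrix.of fun i j : Fin f.natDegree => ((X ^ (j : ℕ) * g) %ₘ f).coeff i).det := by
  rw [Algebra.norm_eq_matrix_det h.basis, h.leftMulMatrix_basis_map]

end IsAdjoinRootMonic

section FractionField

variable {R F K : Type*} [CommRing R] [IsDomain R] [IsIntegrallyClosed R] [Field F] [Algebra R F]
  [IsFractionRing R F] [Field K] [Algebra R K] [Algebra F K] [IsScalarTower R F K] {x : K}

theorem natDegree_minpoly_eq_finrank_of_adjoin_eq_top (hx : IsIntegral R x)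
    (hgen : Algebra.adjoin F {x} = ⊤) : (minpoly R x).natDegree = Module.finrank F K := by
  let h := IsAdjoinRootMonic.mkOfAdjoinEqTop (hx.tower_top (A := F)) hgen
  rw [h.powerBasis.finrank, IsAdjoinRootMonic.powerBasis_dim,
    minpoly.isIntegrallyClosed_eq_field_fractions' F hx, (minpoly.monic hx).natDegree_map]

theorem norm_aeval_eq_det_modByMonic_minpoly (hx : IsIntegral R x)
    (hgen : Algebra.adjoin F {x} = ⊤) (p : R[X]) :
    Algebra.norm F (aeval x p) = algebraMap R F
      (Matrix.of fun i j : Fin (minpoly R x).natDegree =>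
        ((X ^ (j : ℕ) * p) %ₘ minpoly R x).coeff i).det := by
  let h := IsAdjoinRootMonic.mkOfAdjoinEqTop (hx.tower_top (A := F)) hgen
  have hmin := minpoly.isIntegrallyClosed_eq_field_fractions' F hx
  have hdeg : (minpoly F x).natDegree = (minpoly R x).natDegree := by
    rw [hmin, (minpoly.monic hx).natDegree_map]
  have hmod (j : ℕ) : (X ^ j * p.map (algebraMap R F)) %ₘ minpoly F x =
      ((X ^ j * p) %ₘ minpoly R x).map (algebraMap R F) := by
    rw [hmin, Polynomial.map_modByMonic _ (minpoly.monic hx), Polynomial.map_mul,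
      Polynomial.map_pow, map_X]
  rw [← aeval_map_algebraMap F]
  change Algebra.norm F (h.map _) = _
  rw [h.norm_map_eq_det, RingHom.map_det, ← Matrix.det_reindex_self (finCongr hdeg)]
  congr 1
  ext i j
  simp [hmod]

end FractionField

/-- Lemma 1 of the paper: if `K = ℚ(α)` has degree `δ`, `α` is an algebraic
integer with minimal polynomial `m_α = b₀ + b₁x + ⋯ + b_{δ-1}x^{δ-1} + x^δ`,
`S ≥ |bᵢ|` for all `i < δ`, and `y = ∑ zᵢ αⁱ` with `|zᵢ| < M`, then
`|N_{K/ℚ}(y)| ≤ δ^{δ/2} (1+S)^{(δ-1)δ/2} (M-1)^δ`. -/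
theorem norm_bound_of_coeff_bound
    (K : Type*) [Field K] [NumberField K] (δ : ℕ)
    (α : NumberField.RingOfIntegers K)
    (hgen : Algebra.adjoin ℚ {(α : K)} = ⊤)
    (hδ : Module.finrank ℚ K = δ)
    (S : ℤ) (hS : ∀ i < δ, |(minpoly ℤ (α : K)).coeff i| ≤ S)
    (M : ℤ) (z : Fin δ → ℤ) (hz : ∀ i, |z i| < M)
    (y : K) (hy : y = ∑ i : Fin δ, (z i : K) * (α : K) ^ (i : ℕ)) :
    |(Algebra.norm ℚ y : ℚ)| ≤
      Real.sqrt δ ^ δ * ((1 + S : ℝ)) ^ ((δ - 1) * δ / 2) * ((M : ℝ) - 1) ^ δ := by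
  have hαZ : IsIntegral ℤ (α : K) := α.isIntegral_coe
  have hm := minpoly.monic hαZ
  have hdeg : (minpoly ℤ (α : K)).natDegree = δ :=
    hδ ▸ natDegree_minpoly_eq_finrank_of_adjoin_eq_top hαZ hgen
  have hδ0 : 0 < δ := hδ ▸ Module.finrank_pos
  have hS0 : 0 ≤ S := (abs_nonneg _).trans (hS 0 hδ0)
  have hM : 0 ≤ M - 1 := Int.le_sub_one_of_lt ((abs_nonneg _).trans_lt (hz ⟨0, hδ0⟩))
  have hyP : y = aeval (α : K) (ofFn δ z) := by
    rw [hy, ofFn_eq_sum_monomial, map_sum]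
    simp [aeval_monomial]
  have hPm : ofFn δ z %ₘ minpoly ℤ (α : K) = ofFn δ z := by
    rw [modByMonic_eq_self_iff hm, degree_eq_natDegree hm.ne_zero, hdeg]
    exact ofFn_degree_lt z
  have hP (i : ℕ) : |(ofFn δ z %ₘ minpoly ℤ (α : K)).coeff i| ≤ M - 1 := by
    rw [hPm]
    exact abs_coeff_ofFn_le hM (fun i => Int.le_sub_one_of_lt (hz i)) i
  rw [hyP, norm_aeval_eq_det_modByMonic_minpoly hαZ hgen, eq_intCast, Rat.cast_abs,
    Rat.cast_intCast, Int.cast_det]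
  refine (Matrix.abs_det_le_sqrt_pow_mul_prod_of_abs_le _
    (fun j => ((M : ℝ) - 1) * (1 + S) ^ (j : ℕ)) fun i j => ?_).trans_eq ?_
  · rw [Matrix.map_apply, Matrix.of_apply, ← Int.cast_abs]
    exact_mod_cast abs_coeff_X_pow_mul_modByMonic_le hm hS0 (hdeg ▸ hS) hP j i
  · rw [Fin.prod_mul_pow_val, hdeg]
    ring
end

section
/- Let $\alpha$ be an algebraic integer of degree $\delta$ with minimal polynomial having coefficients bounded in absolute value by $S$ (excluding the leading coefficient $1$). Let $M>1$ be an integer and $y=\sum_{i=0}^{\delta-1}z_i\alpha^i$ with $|z_i|<M$ for all $i$. Then for every $j\ge 1$, the coefficients $c_0,\ldots,c_{\delta-1}\in\mathbb{Z}$ in the expansion $y\cdot\alpha^{j-1}=\sum_{i=0}^{\delta-1}c_i\alpha^i$ satisfy $|c_i|\le (M-1)(1+S)^{j-1}$. -/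
open Polynomial

/-!
Write `y = p(α)` with `p = ∑ zᵢ Xⁱ` of degree `< δ`, and let `q` be the minimal polynomial.
Multiplying by `α` corresponds to `r ↦ X r - r_{δ-1} q`, which again has degree `< δ`: the shift
moves the coefficients without enlarging them, and subtracting `r_{δ-1} q` adds at most
`|r_{δ-1}| S` to each, so a coefficient bound `B` becomes `B (1 + S)`. Since `ℤ` is integrally
closed, `q` divides every integer polynomial vanishing at `α`, so two polynomials of degree `< δ`
with the same value at `α` coincide, and the `cᵢ` are the coefficients of the `(j-1)`-fold
reduction of `p`.
-/

namespace Polynomial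

section mulXReduce

variable {R : Type*} [CommRing R]

/-- For monic `q` and `deg r < deg q` this is `X * r %ₘ q`: the leading term of `X * r` is
cancelled by a multiple of `q`. -/
noncomputable def mulXReduce (q r : R[X]) : R[X] := X * r - C (r.coeff (q.natDegree - 1)) * q

theorem coeff_mulXReduce (q r : R[X]) (i : ℕ) :
    (mulXReduce q r).coeff i =
      (if i = 0 then 0 else r.coeff (i - 1)) - r.coeff (q.natDegree - 1) * q.coeff i := by
  rcases i with _ | i <;> simp [mulXReduce, coeff_X_mul]

theorem degree_mulXReduce_lt {q r : R[X]} (hq : q.Monic) (hr : r.degree < q.natDegree) :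
    (mulXReduce q r).degree < q.natDegree := by
  rw [degree_lt_iff_coeff_zero] at hr ⊢
  intro m hm
  rw [coeff_mulXReduce]
  rcases hm.eq_or_lt with rfl | hlt
  · rcases Nat.eq_zero_or_pos q.natDegree with h0 | hpos
    · simp [h0, hr 0 (by omega)]
    · simp [hq.coeff_natDegree, hpos.ne']
  · simp [hr (m - 1) (by omega), coeff_eq_zero_of_natDegree_lt hlt]

theorem aeval_mulXReduce {A : Type*} [CommRing A] [Algebra R A] {q : R[X]} {x : A}
    (hx : aeval x q = 0) (r : R[X]) : aeval x (mulXReduce q r) = x * aeval x r := by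
  simp [mulXReduce, hx]

theorem abs_coeff_mulXReduce_le [LinearOrder R] [IsStrictOrderedRing R] {q r : R[X]} {B S : R}
    (hr : ∀ i < q.natDegree, |r.coeff i| ≤ B) (hq : ∀ i < q.natDegree, |q.coeff i| ≤ S)
    {i : ℕ} (hi : i < q.natDegree) : |(mulXReduce q r).coeff i| ≤ B * (1 + S) := by
  have hB : 0 ≤ B := (abs_nonneg _).trans (hr 0 (by omega))
  have hshift : |(if i = 0 then 0 else r.coeff (i - 1))| ≤ B := by
    split_ifs
    · simpa using hB
    · exact hr _ (by omega)
  have hcancel : |r.coeff (q.natDegree - 1) * q.coeff i| ≤ B * S := by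
    rw [abs_mul]
    exact mul_le_mul (hr _ (by omega)) (hq i hi) (abs_nonneg _) hB
  calc |(mulXReduce q r).coeff i|
      ≤ |(if i = 0 then 0 else r.coeff (i - 1))| + |r.coeff (q.natDegree - 1) * q.coeff i| := by
        rw [coeff_mulXReduce]; exact abs_sub _ _
    _ ≤ B + B * S := add_le_add hshift hcancel
    _ = B * (1 + S) := by ring

theorem aeval_iterate_mulXReduce {A : Type*} [CommRing A] [Algebra R A] {q : R[X]} {x : A}
    (hx : aeval x q = 0) (r : R[X]) (n : ℕ) :
    aeval x ((mulXReduce q)^[n] r) = x ^ n * aeval x r := by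
  induction n with
  | zero => simp
  | succ n ih => rw [Function.iterate_succ_apply', aeval_mulXReduce hx, ih, pow_succ', mul_assoc]

theorem degree_iterate_mulXReduce_lt {q r : R[X]} (hq : q.Monic) (hr : r.degree < q.natDegree)
    (n : ℕ) : ((mulXReduce q)^[n] r).degree < q.natDegree := by
  induction n with
  | zero => exact hr
  | succ n ih => rw [Function.iterate_succ_apply']; exact degree_mulXReduce_lt hq ih

theorem abs_coeff_iterate_mulXReduce_le [LinearOrder R] [IsStrictOrderedRing R] {q r : R[X]}
    {B S : R} (hr : ∀ i < q.natDegree, |r.coeff i| ≤ B) (hq : ∀ i < q.natDegree, |q.coeff i| ≤ S)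
    (n : ℕ) : ∀ i < q.natDegree, |((mulXReduce q)^[n] r).coeff i| ≤ B * (1 + S) ^ n := by
  induction n with
  | zero => simpa using hr
  | succ n ih =>
    intro i hi
    rw [Function.iterate_succ_apply', pow_succ, ← mul_assoc]
    exact abs_coeff_mulXReduce_le ih hq hi

end mulXReduce

theorem coeff_sum_fin_C_mul_X_pow {R : Type*} [Semiring R] {n : ℕ} (f : Fin n → R) (i : Fin n) :
    (∑ k : Fin n, C (f k) * X ^ (k : ℕ)).coeff i = f i := by
  simp [Fin.val_inj]

end Polynomial

theorem minpoly.eq_of_aeval_eq_of_degree_lt {R S : Type*} [CommRing R] [IsDomain R]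
    [IsIntegrallyClosed R] [CommRing S] [IsDomain S] [Algebra R S] [Module.IsTorsionFree R S]
    {s : S} {p p' : R[X]} (hp : p.degree < (minpoly R s).degree)
    (hp' : p'.degree < (minpoly R s).degree) (h : Polynomial.aeval s p = Polynomial.aeval s p') :
    p = p' := by
  by_contra hne
  have := IsIntegrallyClosed.degree_le_of_ne_zero (s := s) (sub_ne_zero.mpr hne)
    (by rw [map_sub, h, sub_self])
  exact (this.trans_lt ((degree_sub_le p p').trans_lt (max_lt hp hp'))).false

theorem coeff_bound_mul_pow_general
    (K : Type*) [Field K] [CharZero K] (δ : ℕ)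
    (α : K) (hint : IsIntegral ℤ α)
    (hdeg : (minpoly ℤ α).natDegree = δ)
    (S : ℤ) (hS : ∀ i < δ, |(minpoly ℤ α).coeff i| ≤ S)
    (M : ℤ)
    (z : Fin δ → ℤ) (hz : ∀ i, |z i| < M)
    (j : ℕ)
    (c : Fin δ → ℤ)
    (hc : (∑ i : Fin δ, (z i : K) * α ^ (i : ℕ)) * α ^ (j - 1) =
        ∑ i : Fin δ, (c i : K) * α ^ (i : ℕ)) :
    ∀ i : Fin δ, |c i| ≤ (M - 1) * (1 + S) ^ (j - 1) := by
  subst hdeg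
  have hmonic : (minpoly ℤ α).Monic := minpoly.monic hint
  let ofCoeffs (f : Fin (minpoly ℤ α).natDegree → ℤ) : ℤ[X] := ∑ k, C (f k) * X ^ (k : ℕ)
  have hcoeff f (k : Fin _) : (ofCoeffs f).coeff k = f k := coeff_sum_fin_C_mul_X_pow f k
  have haeval f : aeval α (ofCoeffs f) = ∑ k, (f k : K) * α ^ (k : ℕ) := by simp [ofCoeffs]
  have hbase : ∀ k < (minpoly ℤ α).natDegree, |(ofCoeffs z).coeff k| ≤ M - 1 := fun k hk => by
    simpa [hcoeff z ⟨k, hk⟩] using Int.le_sub_one_of_lt (hz ⟨k, hk⟩)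
  have hc_eq : ofCoeffs c = (mulXReduce (minpoly ℤ α))^[j - 1] (ofCoeffs z) := by
    refine minpoly.eq_of_aeval_eq_of_degree_lt
      (degree_eq_natDegree hmonic.ne_zero ▸ degree_sum_fin_lt c) ?_ ?_
    · rw [degree_eq_natDegree hmonic.ne_zero]
      exact degree_iterate_mulXReduce_lt hmonic (degree_sum_fin_lt z) _
    · rw [aeval_iterate_mulXReduce (minpoly.aeval ℤ α), haeval, haeval, ← hc, mul_comm]
  intro i
  rw [← hcoeff c, hc_eq]
  exact abs_coeff_iterate_mulXReduce_le hbase hS (j - 1) i i.isLt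

/-- The inductive claim in Lemma 1 of the paper: if `α` is an algebraic integer
of degree `δ` whose minimal polynomial has nonleading coefficients bounded by `S`,
`M > 1`, and `y = ∑ zᵢαⁱ` with `|zᵢ| < M`, then for `j ≥ 1` the integer
coefficients `cᵢ` of `y·α^{j-1} = ∑ cᵢ αⁱ` satisfy `|cᵢ| ≤ (M-1)(1+S)^{j-1}`. -/
theorem coeff_bound_mul_pow
    (K : Type*) [Field K] [CharZero K] (δ : ℕ)
    (α : K) (hint : IsIntegral ℤ α)
    (hdeg : (minpoly ℤ α).natDegree = δ)
    (S : ℤ) (hS : ∀ i < δ, |(minpoly ℤ α).coeff i| ≤ S)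
    (M : ℤ) (hM : 1 < M)
    (z : Fin δ → ℤ) (hz : ∀ i, |z i| < M)
    (j : ℕ) (hj : 1 ≤ j)
    (c : Fin δ → ℤ)
    (hc : (∑ i : Fin δ, (z i : K) * α ^ (i : ℕ)) * α ^ (j - 1) =
        ∑ i : Fin δ, (c i : K) * α ^ (i : ℕ)) :
    ∀ i : Fin δ, |c i| ≤ (M - 1) * (1 + S) ^ (j - 1) :=
  coeff_bound_mul_pow_general K δ α hint hdeg S hS M z hz j c hc
end

section
/- Let $K$ be a number field of degree $\delta$ with ring of integers $\mathcal{O}_K$, generated by an algebraic integer $\alpha$, and let $C_\alpha=\delta^{\delta/2}(1+S)^{(\delta-1)\delta/2}$ where $S$ bounds the coefficients of the minimal polynomial of $\alpha$. Let $M\ge 1$ and let $\mathcal{R}[M]=\{\sum_{i=0}^{\delta-1}z_i\alpha^i : 0\le z_i<M\}$. Let $\mathfrak{p}_1,\ldots,\mathfrak{p}_n$ be distinct prime ideals of $\mathcal{O}_K$ with $\prod_{i=1}^n N(\mathfrak{p}_i)>C_\alpha(M-1)^\delta$. Then the map $\phi:\mathcal{R}[M]\to\prod_{i=1}^n \mathcal{O}_K/\mathfrak{p}_i$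 given by reduction modulo each $\mathfrak{p}_i$ is injective. -/
open Polynomial Finset NumberField

/-!
Write `d = ∑ (zⱼ - wⱼ) αʲ`. If `d ≠ 0` lies in every `𝔭ᵢ`, then `∏ 𝔭ᵢ` divides `(d)`, so
`∏ N(𝔭ᵢ) ≤ |N(d)|`. On the other hand `N(d)` is the determinant of multiplication by `d` in the
basis `1, α, …, α^(δ-1)`, whose `j`-th column holds the coefficients of `Xʲ f mod minpoly α`
for `f = ∑ (zⱼ - wⱼ) Xʲ`. Reducing `X g` modulo the monic minimal polynomial costs at most a
factor `1 + S` in the coefficients, so that column is bounded by `(M - 1)(1 + S)ʲ`, and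
Hadamard's bound `|det A| ≤ (√δ β)^δ` for entries bounded by `β` gives `|N(d)| ≤ C_α (M-1)^δ`.
-/

namespace Polynomial

variable {R : Type*} [CommRing R]

theorem modByMonic_X_mul_eq {p g : R[X]} (hp : p.Monic) (hg : g.degree < p.degree) :
    (X * g) %ₘ p = X * g - C (g.coeff (p.natDegree - 1)) * p := by
  nontriviality R
  refine (div_modByMonic_unique (C (g.coeff (p.natDegree - 1))) _ hp ⟨by ring, ?_⟩).2
  rw [degree_eq_natDegree hp.ne_zero] at hg ⊢
  rw [degree_lt_iff_coeff_zero] at hg ⊢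
  intro m hm
  rcases m with _ | m
  · have h₀ : p.natDegree = 0 := by omega
    simp [hg 0 (by omega), hp.natDegree_eq_zero.mp h₀]
  rw [coeff_sub, coeff_X_mul, coeff_C_mul]
  rcases hm.eq_or_lt with h | h
  · rw [← h, hp.coeff_natDegree, h]; simp
  · rw [hg m (by omega), coeff_eq_zero_of_natDegree_lt h]; simp

variable [LinearOrder R] [IsStrictOrderedRing R] {p : R[X]} {S B : R}

theorem abs_coeff_X_mul_modByMonic_le_s3 (hp : p.Monic) (hS₀ : 0 ≤ S)
    (hS : ∀ i < p.natDegree, |p.coeff i| ≤ S) {g : R[X]} (hg : g.degree < p.degree)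
    (hB : ∀ i, |g.coeff i| ≤ B) (i : ℕ) : |((X * g) %ₘ p).coeff i| ≤ B * (1 + S) := by
  have hB₀ : 0 ≤ B := (abs_nonneg _).trans (hB 0)
  rcases lt_or_ge i p.natDegree with hi | hi
  · have hXg : |(X * g).coeff i| ≤ B := by
      rcases i with _ | i
      · simpa using hB₀
      · simpa only [coeff_X_mul] using hB i
    rw [modByMonic_X_mul_eq hp hg, coeff_sub, coeff_C_mul]
    calc _ ≤ |(X * g).coeff i| + |g.coeff (p.natDegree - 1)| * |p.coeff i| := by
          rw [← abs_mul]; exact abs_sub _ _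
      _ ≤ B + B * S := by gcongr; exacts [hB _, hS i hi]
      _ = B * (1 + S) := by ring
  · rw [coeff_eq_zero_of_degree_lt ((degree_modByMonic_lt _ hp).trans_le ?_), abs_zero]
    · positivity
    · rw [degree_eq_natDegree hp.ne_zero]; exact_mod_cast hi

theorem abs_coeff_X_pow_mul_modByMonic_le_s3 (hp : p.Monic) (hS₀ : 0 ≤ S)
    (hS : ∀ i < p.natDegree, |p.coeff i| ≤ S) {f : R[X]} (hf : f.degree < p.degree)
    (hB : ∀ i, |f.coeff i| ≤ B) (j i : ℕ) :
    |((X ^ j * f) %ₘ p).coeff i| ≤ B * (1 + S) ^ j := by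
  induction j generalizing i with
  | zero => simpa [(modByMonic_eq_self_iff hp).2 hf] using hB i
  | succ j ih =>
    have hstep : (X ^ (j + 1) * f) %ₘ p = (X * ((X ^ j * f) %ₘ p)) %ₘ p := by
      refine modByMonic_eq_of_dvd_sub hp ?_
      rw [pow_succ', mul_assoc, ← mul_sub, modByMonic_eq_sub_mul_div _ p, sub_sub_cancel]
      exact dvd_mul_of_dvd_right (dvd_mul_right _ _) _
    rw [hstep, pow_succ, ← mul_assoc]
    exact abs_coeff_X_mul_modByMonic_le_s3 hp hS₀ hS (degree_modByMonic_lt _ hp) ih i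

end Polynomial

theorem Real.prod_le_arith_mean_pow {ι : Type*} [Fintype ι] (x : ι → ℝ) (hx : ∀ i, 0 ≤ x i) :
    ∏ i, x i ≤ ((∑ i, x i) / Fintype.card ι) ^ Fintype.card ι := by
  rcases isEmpty_or_nonempty ι with _ | _
  · simp
  have hN : Fintype.card ι ≠ 0 := Fintype.card_ne_zero
  have hprod : 0 ≤ ∏ i, x i := prod_nonneg fun i _ ↦ hx i
  have amgm := Real.geom_mean_le_arith_mean univ (fun _ ↦ 1) x (fun _ _ ↦ zero_le_one)
    (by simpa using Nat.pos_of_ne_zero hN) (fun i _ ↦ hx i)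
  simp only [Real.rpow_one, one_mul, sum_const, card_univ, nsmul_eq_mul, mul_one] at amgm
  calc ∏ i, x i = ((∏ i, x i) ^ (Fintype.card ι : ℝ)⁻¹) ^ Fintype.card ι :=
        (Real.rpow_inv_natCast_pow hprod hN).symm
    _ ≤ _ := by gcongr

namespace Matrix

variable {n : Type*} [Fintype n] [DecidableEq n]

theorem PosSemidef.det_le_trace_div_pow {A : Matrix n n ℝ} (hA : A.PosSemidef) :
    A.det ≤ (A.trace / Fintype.card n) ^ Fintype.card n := by
  rw [hA.isHermitian.det_eq_prod_eigenvalues, hA.isHermitian.trace_eq_sum_eigenvalues]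
  exact Real.prod_le_arith_mean_pow _ hA.eigenvalues_nonneg

theorem abs_det_le_of_abs_le {A : Matrix n n ℝ} {β : ℝ} (hβ : 0 ≤ β) (hA : ∀ i j, |A i j| ≤ β) :
    |A.det| ≤ (√(Fintype.card n) * β) ^ Fintype.card n := by
  set N := Fintype.card n
  have hgram : (A * Aᵀ).PosSemidef := by
    simpa using posSemidef_self_mul_conjTranspose A
  have htrace : (A * Aᵀ).trace ≤ N * β ^ 2 * N := by
    calc (A * Aᵀ).trace = ∑ i, ∑ j, A i j ^ 2 := by simp [trace, mul_apply, sq]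
      _ ≤ ∑ i : n, ∑ j : n, β ^ 2 := sum_le_sum fun i _ ↦ sum_le_sum fun j _ ↦
          sq_le_sq' (abs_le.mp (hA i j)).1 (abs_le.mp (hA i j)).2
      _ = N * β ^ 2 * N := by simp [N]; ring
  refine abs_le_of_sq_le_sq ?_ (by positivity)
  calc A.det ^ 2 = (A * Aᵀ).det := by rw [det_mul, det_transpose, sq]
    _ ≤ ((A * Aᵀ).trace / N) ^ N := hgram.det_le_trace_div_pow
    _ ≤ (N * β ^ 2) ^ N := by
        gcongr
        · exact div_nonneg hgram.trace_nonneg (Nat.cast_nonneg _)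
        · exact div_le_of_le_mul₀ (Nat.cast_nonneg _) (by positivity) htrace
    _ = ((√N * β) ^ 2) ^ N := by rw [mul_pow √(N : ℝ), Real.sq_sqrt (Nat.cast_nonneg _)]
    _ = ((√N * β) ^ N) ^ 2 := by ring

theorem abs_det_le_of_abs_le_mul {A : Matrix n n ℝ} {β : ℝ} {s : n → ℝ} (hβ : 0 ≤ β)
    (hs : ∀ j, 0 < s j) (hA : ∀ i j, |A i j| ≤ β * s j) :
    |A.det| ≤ (√(Fintype.card n) * β) ^ Fintype.card n * ∏ j, s j := by
  set B : Matrix n n ℝ := of fun i j ↦ A i j / s j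
  have hdet : A.det = (∏ j, s j) * B.det := by
    rw [← det_mul_row]
    congr
    ext i j
    simp [B, mul_div_cancel₀ _ (hs j).ne']
  have hB : ∀ i j, |B i j| ≤ β := fun i j ↦ by
    rw [show B i j = A i j / s j from rfl, abs_div, abs_of_pos (hs j), div_le_iff₀ (hs j)]
    exact hA i j
  rw [hdet, abs_mul, abs_of_pos (prod_pos fun j _ ↦ hs j), mul_comm]
  exact mul_le_mul_of_nonneg_right (abs_det_le_of_abs_le hβ hB) (prod_nonneg fun j _ ↦ (hs j).le)

end Matrix

namespace PowerBasis

theorem basis_repr_aeval {A S : Type*} [CommRing A] [Ring S] [Algebra A S] (pb : PowerBasis A S)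
    {g : A[X]} (hg : g.natDegree < pb.dim) (i : Fin pb.dim) :
    pb.basis.repr (aeval pb.gen g) i = g.coeff i := by
  have hsum : aeval pb.gen g = ∑ k : Fin pb.dim, g.coeff k • pb.basis k := by
    simp only [aeval_eq_sum_range' hg, ← Fin.sum_univ_eq_sum_range, basis_eq_pow]
  rw [hsum, pb.basis.repr_sum_self]

variable {L : Type*} [Field L] [Algebra ℚ L] (pb : PowerBasis ℚ L)

theorem natDegree_minpoly_int (hint : IsIntegral ℤ pb.gen) :
    (minpoly ℤ pb.gen).natDegree = pb.dim := by
  rw [← pb.natDegree_minpoly, minpoly.isIntegrallyClosed_eq_field_fractions' ℚ hint,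
    (minpoly.monic hint).natDegree_map]

theorem leftMulMatrix_aeval_apply (hint : IsIntegral ℤ pb.gen) (f : ℤ[X]) (i j : Fin pb.dim) :
    Algebra.leftMulMatrix pb.basis (aeval pb.gen f) i j =
      ((X ^ (j : ℕ) * f) %ₘ minpoly ℤ pb.gen).coeff i := by
  have hp := minpoly.monic hint
  have hdeg := natDegree_minpoly_int pb hint
  have hp1 : minpoly ℤ pb.gen ≠ 1 := fun h ↦ pb.dim_ne_zero (by rw [← hdeg, h, natDegree_one])
  have hlt : (((X ^ (j : ℕ) * f) %ₘ minpoly ℤ pb.gen).map (algebraMap ℤ ℚ)).natDegree < pb.dim :=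
    natDegree_map_le.trans_lt ((natDegree_modByMonic_lt _ hp hp1).trans_eq hdeg)
  rw [Algebra.leftMulMatrix_eq_repr_mul, basis_eq_pow, ← aeval_X_pow (R := ℤ), ← map_mul,
    mul_comm f, ← aeval_modByMonic_eq_self_of_root (minpoly.aeval ℤ pb.gen),
    ← aeval_map_algebraMap ℚ, basis_repr_aeval pb hlt, coeff_map, eq_intCast]

theorem abs_norm_aeval_le (hint : IsIntegral ℤ pb.gen) {S B : ℤ}
    (hS : ∀ i < pb.dim, |(minpoly ℤ pb.gen).coeff i| ≤ S)
    {f : ℤ[X]} (hf : f.degree < pb.dim) (hB : ∀ i, |f.coeff i| ≤ B) :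
    |(Algebra.norm ℚ (aeval pb.gen f) : ℝ)| ≤
      (√pb.dim * B) ^ pb.dim * (1 + S : ℝ) ^ ((pb.dim - 1) * pb.dim / 2) := by
  have hp := minpoly.monic hint
  have hdeg := natDegree_minpoly_int pb hint
  have hS₀ : 0 ≤ S := (abs_nonneg _).trans (hS 0 pb.dim_pos)
  have hB₀ : (0 : ℝ) ≤ B := by exact_mod_cast (abs_nonneg _).trans (hB 0)
  have hentry : ∀ i j,
      |((Algebra.leftMulMatrix pb.basis (aeval pb.gen f)).map (Rat.cast : ℚ → ℝ)) i j| ≤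
        B * (1 + S : ℝ) ^ (j : ℕ) := fun i j ↦ by
    rw [Matrix.map_apply, leftMulMatrix_aeval_apply pb hint, Rat.cast_intCast]
    exact_mod_cast abs_coeff_X_pow_mul_modByMonic_le_s3 hp hS₀ (hdeg ▸ hS)
      (by rwa [degree_eq_natDegree hp.ne_zero, hdeg]) hB j i
  have hsum : ∑ j : Fin pb.dim, (j : ℕ) = (pb.dim - 1) * pb.dim / 2 := by
    rw [Fin.sum_univ_eq_sum_range (fun j ↦ j), sum_range_id, mul_comm]
  have hdet := (Rat.castHom ℝ).map_det (Algebra.leftMulMatrix pb.basis (aeval pb.gen f))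
  rw [Algebra.norm_eq_matrix_det pb.basis, ← Rat.coe_castHom, hdet, ← hsum,
    ← prod_pow_eq_pow_sum]
  simpa using Matrix.abs_det_le_of_abs_le_mul hB₀ (fun j ↦ by positivity) hentry

end PowerBasis

theorem Ideal.prod_absNorm_le_natAbs_norm {S : Type*} [CommRing S] [IsDedekindDomain S]
    [Module.Free ℤ S] [Module.Finite ℤ S] {ι : Type*} [Fintype ι] {P : ι → Ideal S}
    (hP : ∀ i, (P i).IsMaximal) (hinj : Function.Injective P) {x : S} (hx : x ≠ 0)
    (hmem : ∀ i, x ∈ P i) : ∏ i, Ideal.absNorm (P i) ≤ (Algebra.norm ℤ x).natAbs := by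
  have hcop : Pairwise (Function.onFun IsCoprime P) := fun i j hij ↦
    Ideal.isCoprime_iff_sup_eq.mpr ((hP i).coprime_of_ne (hP j) (hinj.ne hij))
  have hle : Ideal.span {x} ≤ ∏ i, P i := by
    rw [Ideal.prod_eq_iInf_of_pairwise_isCoprime (hcop.set_pairwise _)]
    simpa [Ideal.span_singleton_le_iff_mem] using hmem
  rw [← Ideal.absNorm_span_singleton, ← map_prod]
  refine Nat.le_of_dvd (Nat.pos_of_ne_zero fun h ↦ hx ?_) (Ideal.absNorm_dvd_absNorm_of_le hle)
  simpa [Ideal.span_singleton_eq_bot] using Ideal.absNorm_eq_zero_iff.mp h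

/-- Injectivity of the encoding map of the ambient Chinese remainder code
(Theorem 1(1) of the paper): if `𝔭₁,…,𝔭ₙ` are distinct nonzero primes of `𝒪_K`
with `∏ N(𝔭ᵢ) > C_α (M-1)^δ`, where `C_α = δ^{δ/2}(1+S)^{(δ-1)δ/2}`, then
reduction modulo the `𝔭ᵢ` is injective on `𝓡[M] = {∑ zᵢαⁱ : 0 ≤ zᵢ < M}`. -/
theorem crt_code_injective
    (K : Type*) [Field K] [NumberField K] (δ : ℕ)
    (α : RingOfIntegers K)
    (hgen : Algebra.adjoin ℚ {(α : K)} = ⊤)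
    (hδ : Module.finrank ℚ K = δ)
    (S : ℤ) (hS : ∀ i < δ, |(minpoly ℤ (α : K)).coeff i| ≤ S)
    (M : ℤ) (hM : 1 ≤ M)
    (n : ℕ) (𝔭 : Fin n → Ideal (RingOfIntegers K))
    (hprime : ∀ i, (𝔭 i).IsPrime) (hbot : ∀ i, 𝔭 i ≠ ⊥)
    (hdist : Function.Injective 𝔭)
    (hnorm : (∏ i : Fin n, (Ideal.absNorm (𝔭 i) : ℝ)) >
      Real.sqrt δ ^ δ * ((1 + S : ℝ)) ^ ((δ - 1) * δ / 2) * ((M : ℝ) - 1) ^ δ)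
    (z w : Fin δ → ℤ)
    (hz : ∀ i, 0 ≤ z i ∧ z i < M) (hw : ∀ i, 0 ≤ w i ∧ w i < M)
    (heq : ∀ i : Fin n,
      Ideal.Quotient.mk (𝔭 i) (∑ j : Fin δ, (z j : RingOfIntegers K) * α ^ (j : ℕ)) =
      Ideal.Quotient.mk (𝔭 i) (∑ j : Fin δ, (w j : RingOfIntegers K) * α ^ (j : ℕ))) :
    (∑ j : Fin δ, (z j : RingOfIntegers K) * α ^ (j : ℕ)) =
      ∑ j : Fin δ, (w j : RingOfIntegers K) * α ^ (j : ℕ) := by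
  by_contra hne
  set f : ℤ[X] := ofFn δ (z - w)
  have hd : aeval α f = (∑ j : Fin δ, (z j : 𝓞 K) * α ^ (j : ℕ)) -
      ∑ j : Fin δ, (w j : 𝓞 K) * α ^ (j : ℕ) := by
    simp [f, ofFn_eq_sum_monomial, aeval_monomial]
  have hd₀ : aeval α f ≠ 0 := hd ▸ sub_ne_zero.mpr hne
  have hlower := Ideal.prod_absNorm_le_natAbs_norm (fun i ↦ (hprime i).isMaximal (hbot i)) hdist
    hd₀ fun i ↦ hd ▸ Ideal.Quotient.eq.mp (heq i)
  have hcoeff : ∀ i, |f.coeff i| ≤ M - 1 := fun i ↦ by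
    rcases lt_or_ge i δ with hi | hi
    · rw [ofFn_coeff_eq_val_of_lt _ hi, Pi.sub_apply, abs_le]
      have := hz ⟨i, hi⟩; have := hw ⟨i, hi⟩; constructor <;> omega
    · rw [ofFn_coeff_eq_zero_of_ge _ hi, abs_zero]; omega
  let pb := PowerBasis.ofAdjoinEqTop (IsIntegral.of_finite ℚ (α : K)) hgen
  have hdim : pb.dim = δ := by rw [← pb.finrank, hδ]
  have hupper := pb.abs_norm_aeval_le (RingOfIntegers.isIntegral_coe α) (hdim ▸ hS)
    (hdim ▸ ofFn_degree_lt _) hcoeff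
  rw [hdim, show pb.gen = algebraMap (𝓞 K) K α from rfl, aeval_algebraMap_apply,
    show algebraMap (𝓞 K) K (aeval α f) = aeval α f from rfl, ← Algebra.coe_norm_int] at hupper
  have hlower' :
      (∏ i : Fin n, (Ideal.absNorm (𝔭 i) : ℝ)) ≤ |(Algebra.norm ℤ (aeval α f) : ℝ)| := by
    rw [← Int.cast_abs, ← Nat.cast_natAbs]
    exact_mod_cast hlower
  push_cast [mul_pow] at hupper
  linarith
end

section
/- Let $K$ be a number field of degree $r+1$, $\alpha\in\mathcal{O}_K$ a generator with minimal polynomial coefficient bound $S$ and $C_\alpha=(r+1)^{(r+1)/2}(1+S)^{r(r+1)/2}$. Let $M,s\ge 1$, let $p_1,\ldots,p_\ell$ be totally split primes not dividing $\operatorname{disc}(m_\alpha)$, with prime ideals $\mathfrak{p}_j^{(p_i)}$, $1\le j\le r+1$, above each $p_i$. If $\prod_{i,j}N(\mathfrak{p}_j^{(p_i)})=\prod_{i=1}^\ell p_i^{r+1}>C_\alpha(M^{s+1}-1)^{r+1}$, then the encoding map $\phi:\mathcal{A}[M]\to\prod_{i=1}^\ell\mathbb{F}_{p_i}^{r+1}$,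 $x\mapsto(x\bmod\mathfrak{p}_j^{(p_i)})_{i,j}$, is injective, so the code $\mathcal{C}=\phi(\mathcal{A}[M])$ has size $M^{r(s+1)}$. -/
/-!
Let `y` be the difference of two codewords. Since the `𝔭` are pairwise distinct maximal ideals whose
products over `j` are the `(pᵢ)`, `y ∈ ⋂ 𝔭 = ∏ 𝔭 = (N)` with `N = ∏ pᵢ`, so if `y ≠ 0` then
`N^(r+1) ≤ |Nm y|`. On the other hand `y = ∑ cᵤ αᵘ` with `|cᵤ| ≤ M^(s+1) - 1`, and `Nm y` is the
determinant of multiplication by `y` in the basis `1, α, …, αʳ`, whose `k`-th column `yαᵏ` has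
coordinates at most `(M^(s+1) - 1)(1 + S)ᵏ` because multiplication by `α` acts by the companion
matrix. Hadamard's inequality bounds that determinant by `C_α (M^(s+1) - 1)^(r+1) < N^(r+1)`, so
`y = 0`; the powers `αᵘ`, `u < r + 1`, are independent and base-`M` digits are unique, so the two
codewords have the same digits.
-/

open Module Polynomial Finset NumberField

theorem Matrix.abs_det_le_prod_sqrt_sum_sq_s11 {n : ℕ} (A : Matrix (Fin n) (Fin n) ℝ) :
    |A.det| ≤ ∏ j, √(∑ i, A i j ^ 2) := by
  have : Fact (finrank ℝ (EuclideanSpace ℝ (Fin n)) = n) := ⟨by simp⟩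
  let b := EuclideanSpace.basisFun (Fin n) ℝ
  have h := b.toBasis.orientation.abs_volumeForm_apply_le fun j => WithLp.toLp 2 fun i => A i j
  rw [b.toBasis.orientation.volumeForm_robust' b, Basis.det_apply] at h
  convert h using 3
  · ext i j; simp [b, Basis.toMatrix_apply]
  · simp [EuclideanSpace.norm_eq]

theorem Matrix.abs_det_le_of_abs_le_s11 {n : ℕ} {A : Matrix (Fin n) (Fin n) ℝ} {b : Fin n → ℝ}
    (hA : ∀ i j, |A i j| ≤ b j) : |A.det| ≤ √n ^ n * ∏ j, b j := by
  have hcol : ∀ j, √(∑ i, A i j ^ 2) ≤ √n * b j := fun j => by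
    have hb : 0 ≤ b j := (abs_nonneg _).trans (hA j j)
    rw [← Real.sqrt_sq hb, ← Real.sqrt_mul (Nat.cast_nonneg n)]
    refine Real.sqrt_le_sqrt ?_
    calc ∑ i, A i j ^ 2 ≤ ∑ _i : Fin n, b j ^ 2 :=
          sum_le_sum fun i _ => sq_le_sq' (abs_le.1 (hA i j)).1 (abs_le.1 (hA i j)).2
      _ = n * b j ^ 2 := by simp
  calc |A.det| ≤ ∏ j, √(∑ i, A i j ^ 2) := A.abs_det_le_prod_sqrt_sum_sq_s11
    _ ≤ ∏ j, (√n * b j) := prod_le_prod (fun _ _ => Real.sqrt_nonneg _) fun j _ => hcol j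
    _ = √n ^ n * ∏ j, b j := by simp [prod_mul_distrib]

theorem Finset.sum_ite_le_of_subsingleton {ι R : Type*} [Fintype ι] [Semiring R] [PartialOrder R]
    [IsOrderedRing R] {P : ι → Prop} [DecidablePred P] (hP : ∀ j j', P j → P j' → j = j') {x : R}
    (hx : 0 ≤ x) : ∑ j, (if P j then x else 0) ≤ x := by
  rw [sum_ite, sum_const_zero, add_zero, sum_const, nsmul_eq_mul]
  have hcard : #{j | P j} ≤ 1 := card_le_one.2 fun j hj j' hj' =>
    hP j j' (mem_filter.1 hj).2 (mem_filter.1 hj').2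
  exact mul_le_of_le_one_left hx ((Nat.mono_cast hcard).trans_eq Nat.cast_one)

namespace PowerBasis

theorem basis_repr_sum_smul_gen_pow {R S : Type*} [CommRing R] [Ring S] [Algebra R S]
    (pb : PowerBasis R S) {m : ℕ} (hm : m ≤ pb.dim) (q : Fin m → R) :
    ⇑(pb.basis.repr (∑ u, q u • pb.gen ^ (u : ℕ))) = Function.extend (Fin.castLE hm) q 0 := by
  have hsum : ∑ u, q u • pb.gen ^ (u : ℕ) =
      ∑ i, Function.extend (Fin.castLE hm) q 0 i • pb.basis i :=
    Fintype.sum_of_injective _ (Fin.castLE_injective hm) _ _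
      (fun i hi => by rw [Function.extend_apply' _ _ _ hi, Pi.zero_apply, zero_smul])
      (fun u => by rw [(Fin.castLE_injective hm).extend_apply, pb.basis_eq_pow, Fin.val_castLE])
  rw [hsum, pb.basis.repr_sum_self]

theorem basis_repr_sum_smul_gen_pow_castLE {R S : Type*} [CommRing R] [Ring S] [Algebra R S]
    (pb : PowerBasis R S) {m : ℕ} (hm : m ≤ pb.dim) (q : Fin m → R) (u : Fin m) :
    pb.basis.repr (∑ u, q u • pb.gen ^ (u : ℕ)) (Fin.castLE hm u) = q u := by
  rw [pb.basis_repr_sum_smul_gen_pow hm, (Fin.castLE_injective hm).extend_apply]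

variable {R L : Type*} [Field R] [LinearOrder R] [IsStrictOrderedRing R] [Field L] [Algebra R L]
  (pb : PowerBasis R L) {S C : R}

theorem abs_basis_repr_sum_smul_gen_pow_le {m : ℕ} (hm : m ≤ pb.dim) {q : Fin m → R}
    (hq : ∀ u, |q u| ≤ C) (hC : 0 ≤ C) (i : Fin pb.dim) :
    |pb.basis.repr (∑ u, q u • pb.gen ^ (u : ℕ)) i| ≤ C := by
  by_cases hi : ∃ u, Fin.castLE hm u = i
  · obtain ⟨u, rfl⟩ := hi
    rw [pb.basis_repr_sum_smul_gen_pow_castLE]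
    exact hq u
  · rw [pb.basis_repr_sum_smul_gen_pow hm, Function.extend_apply' _ _ _ hi, Pi.zero_apply,
      abs_zero]
    exact hC

theorem abs_repr_mul_gen_le (hS : ∀ i < pb.dim, |(minpoly R pb.gen).coeff i| ≤ S) {w : L}
    (hw : ∀ i, |pb.basis.repr w i| ≤ C) (i : Fin pb.dim) :
    |pb.basis.repr (w * pb.gen) i| ≤ C * (1 + S) := by
  have hC : 0 ≤ C := (abs_nonneg _).trans (hw i)
  have hS0 : 0 ≤ S := (abs_nonneg _).trans (hS i i.2)
  -- multiplication by `gen` acts on coordinates by the companion matrix of the minimal polynomial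
  rw [mul_comm, ← Algebra.leftMulMatrix_mulVec_repr, pb.leftMulMatrix, Matrix.mulVec, dotProduct,
    pb.minpolyGen_eq]
  calc _ ≤ ∑ j : Fin pb.dim, ((if (j : ℕ) + 1 = pb.dim then S else 0) +
          (if (i : ℕ) = j + 1 then 1 else 0)) * C := by
        refine (abs_sum_le_sum_abs _ _).trans (sum_le_sum fun j _ => ?_)
        rw [abs_mul, Matrix.of_apply]
        refine mul_le_mul ?_ (hw j) (abs_nonneg _) (by positivity)
        split_ifs <;> simp only [abs_neg, abs_one, abs_zero] <;> linarith [hS i i.2]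
    _ ≤ C * (1 + S) := by
        rw [← sum_mul, sum_add_distrib, mul_comm, add_comm]
        refine mul_le_mul_of_nonneg_left (add_le_add ?_ ?_) hC <;>
          exact sum_ite_le_of_subsingleton (fun j j' hj hj' => by omega) (by positivity)

theorem abs_repr_mul_gen_pow_le (hS : ∀ i < pb.dim, |(minpoly R pb.gen).coeff i| ≤ S) {w : L}
    (hw : ∀ i, |pb.basis.repr w i| ≤ C) (k : ℕ) (i : Fin pb.dim) :
    |pb.basis.repr (w * pb.gen ^ k) i| ≤ C * (1 + S) ^ k := by
  induction k generalizing i with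
  | zero => simpa using hw i
  | succ k ih => simpa only [pow_succ, ← mul_assoc] using pb.abs_repr_mul_gen_le hS ih i

theorem abs_leftMulMatrix_le (hS : ∀ i < pb.dim, |(minpoly R pb.gen).coeff i| ≤ S) {x : L}
    (hx : ∀ i, |pb.basis.repr x i| ≤ C) (i j : Fin pb.dim) :
    |Algebra.leftMulMatrix pb.basis x i j| ≤ C * (1 + S) ^ (j : ℕ) := by
  rw [Algebra.leftMulMatrix_eq_repr_mul, pb.basis_eq_pow]
  exact pb.abs_repr_mul_gen_pow_le hS hx j i

end PowerBasis

theorem PowerBasis.abs_norm_le {L : Type*} [Field L] [Algebra ℚ L] (pb : PowerBasis ℚ L) {S : ℚ}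
    (hS : ∀ i < pb.dim, |(minpoly ℚ pb.gen).coeff i| ≤ S) {x : L} {C : ℚ}
    (hx : ∀ i, |pb.basis.repr x i| ≤ C) :
    |(Algebra.norm ℚ x : ℝ)| ≤
      √pb.dim ^ pb.dim * (1 + S : ℝ) ^ (pb.dim * (pb.dim - 1) / 2) * (C : ℝ) ^ pb.dim := by
  have hA : ∀ i j, |(Algebra.leftMulMatrix pb.basis x).map ((↑) : ℚ → ℝ) i j| ≤
      C * (1 + S : ℝ) ^ (j : ℕ) := fun i j => by
    simpa using (Rat.cast_le (K := ℝ)).2 (pb.abs_leftMulMatrix_le hS hx i j)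
  have hexp : ∑ j : Fin pb.dim, (j : ℕ) = pb.dim * (pb.dim - 1) / 2 := by
    rw [Fin.sum_univ_eq_sum_range (fun j => j), sum_range_id]
  rw [Algebra.norm_eq_matrix_det pb.basis, Rat.cast_det]
  refine (Matrix.abs_det_le_of_abs_le_s11 hA).trans_eq ?_
  rw [prod_mul_distrib, prod_pow_eq_pow_sum, hexp, prod_const, card_univ, Fintype.card_fin]
  ring

theorem Algebra.natCast_pow_finrank_le_abs_norm {S : Type*} [CommRing S] [IsDomain S]
    [Module.Free ℤ S] [Module.Finite ℤ S] {n : ℕ} {y : S} (hy : y ≠ 0) (hn : (n : S) ∣ y) :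
    (n : ℤ) ^ finrank ℤ S ≤ |Algebra.norm ℤ y| := by
  obtain ⟨z, rfl⟩ := hn
  have hz : Algebra.norm ℤ z ≠ 0 := Algebra.norm_ne_zero_iff.2 (right_ne_zero_of_mul hy)
  rw [map_mul, ← map_natCast (algebraMap ℤ S), Algebra.norm_algebraMap, abs_mul, abs_pow,
    Nat.abs_cast]
  exact le_mul_of_one_le_right (by positivity) (Int.one_le_abs hz)

theorem NumberField.RingOfIntegers.eq_zero_of_natCast_dvd_of_abs_repr_le {K : Type*} [Field K]
    [NumberField K] (pb : PowerBasis ℚ K) {S : ℚ}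
    (hS : ∀ i < pb.dim, |(minpoly ℚ pb.gen).coeff i| ≤ S) {N : ℕ} {y : 𝓞 K} (hN : (N : 𝓞 K) ∣ y)
    {C : ℚ} (hy : ∀ i, |pb.basis.repr (y : K) i| ≤ C)
    (hlt : √pb.dim ^ pb.dim * (1 + S : ℝ) ^ (pb.dim * (pb.dim - 1) / 2) * (C : ℝ) ^ pb.dim <
      (N : ℝ) ^ pb.dim) :
    y = 0 := by
  by_contra hy0
  have hlow := Algebra.natCast_pow_finrank_le_abs_norm hy0 hN
  rw [RingOfIntegers.rank, pb.finrank] at hlow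
  have hup := pb.abs_norm_le hS hy
  rw [← Algebra.coe_norm_int, Rat.cast_intCast] at hup
  have hlow' : (N : ℝ) ^ pb.dim ≤ |(Algebra.norm ℤ y : ℝ)| := by exact_mod_cast hlow
  linarith

theorem Ideal.mem_prod_of_forall_mem {R ι : Type*} [CommRing R] [Fintype ι] {P : ι → Ideal R}
    (hinj : Function.Injective P) (hP : ∀ i, (P i).IsMaximal) {y : R} (hy : ∀ i, y ∈ P i) :
    y ∈ ∏ i, P i := by
  rw [Ideal.prod_eq_iInf_of_pairwise_isCoprime fun i _ j _ hij =>
    Ideal.isCoprime_of_isMaximal (hinj.ne hij)]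
  simpa [Submodule.mem_iInf] using hy

theorem natCast_prod_dvd_of_forall_mem {R ι κ : Type*} [CommRing R] [IsDedekindDomain R]
    [CharZero R] [Fintype ι] [Fintype κ] {P : ι → κ → Ideal R}
    (hinj : Function.Injective fun x : ι × κ => P x.1 x.2) (hP : ∀ i j, (P i j).IsPrime)
    {p : ι → ℕ} (hp : ∀ i, p i ≠ 0) (hfact : ∀ i, ∏ j, P i j = Ideal.span {(p i : R)}) {y : R}
    (hy : ∀ i j, y ∈ P i j) :
    ((∏ i, p i : ℕ) : R) ∣ y := by
  have hbot : ∀ i j, P i j ≠ ⊥ := fun i j h => hp i <| by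
    have := hfact i
    rw [prod_eq_zero (mem_univ j) h, eq_comm, Ideal.zero_eq_bot,
      Ideal.span_singleton_eq_bot] at this
    exact_mod_cast this
  have := Ideal.mem_prod_of_forall_mem hinj (fun x => (hP x.1 x.2).isMaximal (hbot x.1 x.2))
    fun x => hy x.1 x.2
  rw [Fintype.prod_prod_type, prod_congr rfl fun i _ => hfact i, Ideal.prod_span_singleton,
    Ideal.mem_span_singleton] at this
  exact_mod_cast this

theorem sum_sum_intCast_mul_pow_comm {R : Type*} [CommRing R] {m n : ℕ} (b : Fin m → Fin n → ℤ)
    (θ : R) (M : ℤ) :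
    ∑ t, (∑ u, (b t u : R) * θ ^ (u : ℕ)) * (M : R) ^ (t : ℕ) =
      ∑ u, ((∑ t, b t u * M ^ (t : ℕ) : ℤ) : R) * θ ^ (u : ℕ) := by
  simp only [Int.cast_sum, Int.cast_mul, Int.cast_pow, sum_mul]
  rw [sum_comm]
  simp only [mul_right_comm]

section Digits

variable {M : ℤ}

theorem sum_mul_pow_fin_succ {n : ℕ} (d : Fin (n + 1) → ℤ) :
    ∑ t, d t * M ^ (t : ℕ) = d 0 + M * ∑ t : Fin n, d t.succ * M ^ (t : ℕ) := by
  rw [Fin.sum_univ_succ, mul_sum]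
  simp [pow_succ, mul_comm, mul_left_comm]

theorem sum_digit_mul_pow_mem_Ico {n : ℕ} {d : Fin n → ℤ} (hd : ∀ t, 0 ≤ d t ∧ d t < M) :
    0 ≤ ∑ t, d t * M ^ (t : ℕ) ∧ ∑ t, d t * M ^ (t : ℕ) < M ^ n := by
  induction n with
  | zero => simp
  | succ n ih =>
    obtain ⟨h0, h1⟩ := ih fun t => hd t.succ
    obtain ⟨hd0, hdM⟩ := hd 0
    rw [sum_mul_pow_fin_succ, pow_succ]
    constructor <;> nlinarith

theorem abs_sum_digit_mul_pow_sub_le {n : ℕ} {d d' : Fin n → ℤ} (hd : ∀ t, 0 ≤ d t ∧ d t < M)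
    (hd' : ∀ t, 0 ≤ d' t ∧ d' t < M) :
    |∑ t, d t * M ^ (t : ℕ) - ∑ t, d' t * M ^ (t : ℕ)| ≤ M ^ n - 1 := by
  obtain ⟨h0, h1⟩ := sum_digit_mul_pow_mem_Ico hd
  obtain ⟨h0', h1'⟩ := sum_digit_mul_pow_mem_Ico hd'
  rw [abs_le]
  constructor <;> linarith

theorem sum_digit_mul_pow_injective {n : ℕ} {d d' : Fin n → ℤ} (hd : ∀ t, 0 ≤ d t ∧ d t < M)
    (hd' : ∀ t, 0 ≤ d' t ∧ d' t < M) (h : ∑ t, d t * M ^ (t : ℕ) = ∑ t, d' t * M ^ (t : ℕ)) :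
    d = d' := by
  induction n with
  | zero => exact funext (·.elim0)
  | succ n ih =>
    rw [sum_mul_pow_fin_succ, sum_mul_pow_fin_succ] at h
    have hM : M ≠ 0 := by linarith [hd 0]
    have h0 : d 0 = d' 0 := by
      have hdvd : M ∣ d 0 - d' 0 :=
        ⟨∑ t : Fin n, d' t.succ * M ^ (t : ℕ) - ∑ t : Fin n, d t.succ * M ^ (t : ℕ),
          by linear_combination h⟩
      have hlt : |d 0 - d' 0| < M :=
        abs_sub_lt_iff.2 ⟨by linarith [hd 0, hd' 0], by linarith [hd 0, hd' 0]⟩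
      exact sub_eq_zero.1 (Int.eq_zero_of_abs_lt_dvd hdvd hlt)
    rw [h0, add_right_inj, mul_right_inj' hM] at h
    have htail := ih (fun t => hd t.succ) (fun t => hd' t.succ) h
    exact funext fun t => Fin.cases h0 (fun t => congrFun htail t) t

end Digits

theorem split_code_injective_general
    (K : Type*) [Field K] [NumberField K] (r : ℕ)
    (α : RingOfIntegers K)
    (hgen : Algebra.adjoin ℚ {(α : K)} = ⊤)
    (hδ : Module.finrank ℚ K = r + 1)
    (S : ℤ) (hS : ∀ i < r + 1, |(minpoly ℤ (α : K)).coeff i| ≤ S)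
    (M : ℤ) (hM : 1 ≤ M) (s : ℕ)
    (ℓ : ℕ) (p : Fin ℓ → ℕ) (hp : ∀ i, (p i).Prime)
    -- each `pᵢ` is totally split in `K/ℚ`, with primes `𝔭 i 1, …, 𝔭 i (r+1)` above it:
    (𝔭 : Fin ℓ → Fin (r + 1) → Ideal (RingOfIntegers K))
    (hprime : ∀ i j, (𝔭 i j).IsPrime)
    (hdist : Function.Injective (fun x : Fin ℓ × Fin (r + 1) => 𝔭 x.1 x.2))
    (hfact : ∀ i, ∏ j : Fin (r + 1), 𝔭 i j = Ideal.span {(p i : RingOfIntegers K)})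
    (hnorm : (∏ i : Fin ℓ, (p i : ℝ) ^ (r + 1)) >
      Real.sqrt (r + 1) ^ (r + 1) * ((1 + S : ℝ)) ^ (r * (r + 1) / 2) *
        ((M : ℝ) ^ (s + 1) - 1) ^ (r + 1))
    (a a' : Fin (s + 1) → Fin r → ℤ)
    (ha : ∀ j i, 0 ≤ a j i ∧ a j i < M) (ha' : ∀ j i, 0 ≤ a' j i ∧ a' j i < M)
    (heq : ∀ (i : Fin ℓ) (j : Fin (r + 1)),
      Ideal.Quotient.mk (𝔭 i j) (∑ t : Fin (s + 1),
        (∑ u : Fin r, (a t u : RingOfIntegers K) * α ^ (u : ℕ)) *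
          (M : RingOfIntegers K) ^ (t : ℕ)) =
      Ideal.Quotient.mk (𝔭 i j) (∑ t : Fin (s + 1),
        (∑ u : Fin r, (a' t u : RingOfIntegers K) * α ^ (u : ℕ)) *
          (M : RingOfIntegers K) ^ (t : ℕ))) :
    a = a' := by
  set c : Fin r → ℤ := fun u => ∑ t, a t u * M ^ (t : ℕ) - ∑ t, a' t u * M ^ (t : ℕ) with hc
  set y : 𝓞 K := ∑ u, (c u : 𝓞 K) * α ^ (u : ℕ) with hy
  have hy_mem : ∀ i j, y ∈ 𝔭 i j := fun i j => by
    simpa [hy, hc, sub_mul, sum_sub_distrib, sum_sum_intCast_mul_pow_comm] using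
      Ideal.Quotient.eq.1 (heq i j)
  have hN_dvd : ((∏ i, p i : ℕ) : 𝓞 K) ∣ y :=
    natCast_prod_dvd_of_forall_mem hdist hprime (fun i => (hp i).ne_zero) hfact hy_mem
  let pb := PowerBasis.ofAdjoinEqTop (IsIntegral.of_finite ℚ (α : K)) hgen
  have hdim : pb.dim = r + 1 := by rw [← pb.finrank, hδ]
  have hS' : ∀ i < pb.dim, |(minpoly ℚ pb.gen).coeff i| ≤ S := fun i hi => by
    rw [PowerBasis.ofAdjoinEqTop_gen, minpoly.isIntegrallyClosed_eq_field_fractions' ℚ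
      (RingOfIntegers.isIntegral_coe α), coeff_map, eq_intCast, ← Int.cast_abs, Int.cast_le]
    exact hS i (hdim ▸ hi)
  have hr : r ≤ pb.dim := hdim ▸ r.le_succ
  have hyK : (y : K) = ∑ u, (c u : ℚ) • pb.gen ^ (u : ℕ) := by simp [hy, Algebra.smul_def, pb]
  have hy_coord : ∀ i, |pb.basis.repr (y : K) i| ≤ ((M ^ (s + 1) - 1 : ℤ) : ℚ) := fun i => hyK ▸
    pb.abs_basis_repr_sum_smul_gen_pow_le hr
      (fun u => by exact_mod_cast abs_sum_digit_mul_pow_sub_le (ha · u) (ha' · u))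
      (by exact_mod_cast sub_nonneg.2 (one_le_pow₀ hM)) i
  have hy0 : y = 0 := by
    refine RingOfIntegers.eq_zero_of_natCast_dvd_of_abs_repr_le pb hS' hN_dvd hy_coord ?_
    rw [hdim, Nat.add_sub_cancel, Nat.mul_comm (r + 1)]
    push_cast
    rwa [← prod_pow]
  funext t u
  have hcu : c u = 0 := by
    have := pb.basis_repr_sum_smul_gen_pow_castLE hr (fun u => (c u : ℚ)) u
    simpa [← hyK, hy0] using this.symm
  exact congrFun (sum_digit_mul_pow_injective (ha · u) (ha' · u) (sub_eq_zero.1 hcu)) t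

/-- Lemma 3 of the paper: if `∏ᵢ pᵢ^{r+1} > C_α (M^{s+1}-1)^{r+1}` with
`C_α = (r+1)^{(r+1)/2}(1+S)^{r(r+1)/2}`, then the encoding map
`φ : 𝓐[M] → ∏ᵢ 𝔽_{pᵢ}^{r+1}` of the good split code is injective, so the code
`𝒞 = φ(𝓐[M])` has size `M^{r(s+1)}`. -/
theorem split_code_injective
    (K : Type*) [Field K] [NumberField K] (r : ℕ)
    (α : RingOfIntegers K)
    (hgen : Algebra.adjoin ℚ {(α : K)} = ⊤)
    (hδ : Module.finrank ℚ K = r + 1)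
    (S : ℤ) (hS : ∀ i < r + 1, |(minpoly ℤ (α : K)).coeff i| ≤ S)
    (M : ℤ) (hM : 1 ≤ M) (s : ℕ) (hs : 1 ≤ s)
    (ℓ : ℕ) (p : Fin ℓ → ℕ) (hp : ∀ i, (p i).Prime)
    (hpmono : StrictMono p)
    -- each `pᵢ` is totally split in `K/ℚ`, with primes `𝔭 i 1, …, 𝔭 i (r+1)` above it:
    (𝔭 : Fin ℓ → Fin (r + 1) → Ideal (RingOfIntegers K))
    (hprime : ∀ i j, (𝔭 i j).IsPrime)
    (hdist : Function.Injective (fun x : Fin ℓ × Fin (r + 1) => 𝔭 x.1 x.2))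
    (hfact : ∀ i, ∏ j : Fin (r + 1), 𝔭 i j = Ideal.span {(p i : RingOfIntegers K)})
    (hresidue : ∀ i j, Ideal.absNorm (𝔭 i j) = p i)
    -- no `pᵢ` divides the discriminant of the minimal polynomial of `α`:
    (hdisc : ∀ (i : Fin ℓ) (rts : Fin (r + 1) → ℂ) (D : ℤ),
      (minpoly ℤ (α : K)).map (Int.castRingHom ℂ) = ∏ j : Fin (r + 1), (X - C (rts j)) →
      (D : ℂ) = ∏ x ∈ Finset.univ.offDiag, (rts x.1 - rts x.2) →
      ¬ ((p i : ℤ) ∣ D))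
    (hnorm : (∏ i : Fin ℓ, (p i : ℝ) ^ (r + 1)) >
      Real.sqrt (r + 1) ^ (r + 1) * ((1 + S : ℝ)) ^ (r * (r + 1) / 2) *
        ((M : ℝ) ^ (s + 1) - 1) ^ (r + 1))
    (a a' : Fin (s + 1) → Fin r → ℤ)
    (ha : ∀ j i, 0 ≤ a j i ∧ a j i < M) (ha' : ∀ j i, 0 ≤ a' j i ∧ a' j i < M)
    (heq : ∀ (i : Fin ℓ) (j : Fin (r + 1)),
      Ideal.Quotient.mk (𝔭 i j) (∑ t : Fin (s + 1),
        (∑ u : Fin r, (a t u : RingOfIntegers K) * α ^ (u : ℕ)) *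
          (M : RingOfIntegers K) ^ (t : ℕ)) =
      Ideal.Quotient.mk (𝔭 i j) (∑ t : Fin (s + 1),
        (∑ u : Fin r, (a' t u : RingOfIntegers K) * α ^ (u : ℕ)) *
          (M : RingOfIntegers K) ^ (t : ℕ))) :
    a = a' :=
  split_code_injective_general K r α hgen hδ S hS M hM s ℓ p hp 𝔭 hprime hdist hfact hnorm a a' ha
    ha' heq
end
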